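/- In the setting of a Lie algebra g with A₄-action and coordinate algebra (A,*), for all a,b,x,y ∈ A and i,j ∈ Z/3: [δ_i(a,b), δ_j(x,y)] = δ_j(δ_{i−j}(a,b)(x), y) + δ_j(x, δ_{i−j}(a,b)(y)), where the bracket is the commutator in gl(A). -/
import Mathlib


/-- The embedding `ιᵢ = φ^i ∘ ι₀` of the coordinate space `A = g₀` into `g`. -/
def iota {F : Type*} [Field F] {g : Type*} [LieRing g] [LieAlgebra F g]
    (φ : g →ₗ⁅F⁆ g) (A : Submodule F g) (i : ZMod 3) (x : A) : g :=
  (fun z => φ z)^[i.val] (x : g)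

section Aux

variable {F : Type*} [Field F] {g : Type*} [LieRing g] [LieAlgebra F g]
  (φ : g →ₗ⁅F⁆ g) (A : Submodule F g)

lemma phi_it_lie (n : ℕ) (x y : g) :
    (fun z => φ z)^[n] ⁅x, y⁆ = ⁅(fun z => φ z)^[n] x, (fun z => φ z)^[n] y⁆ := by
  induction n generalizing x y with
  | zero => simp
  | succ n ih =>
      simp only [Function.iterate_succ_apply]
      rw [show φ ⁅x, y⁆ = ⁅φ x, φ y⁆ from φ.map_lie x y, ih]

lemma phi_it_add (n : ℕ) (x y : g) :
    (fun z => φ z)^[n] (x + y) = (fun z => φ z)^[n] x + (fun z => φ z)^[n] y := by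
  induction n generalizing x y with
  | zero => simp
  | succ n ih =>
      simp only [Function.iterate_succ_apply]
      rw [show φ (x + y) = φ x + φ y from φ.map_add x y, ih]

lemma phi_it_three_mul (hφ3 : ∀ x, φ (φ (φ x)) = x) (q : ℕ) (x : g) : (fun z => φ z)^[3 * q] x = x := by
  induction q generalizing x with
  | zero => simp
  | succ q ih =>
      have : 3 * (q + 1) = 3 * q + 3 := by ring
      rw [this, Function.iterate_add_apply]
      have h3 : (fun z => φ z)^[3] x = x := hφ3 x
      rw [h3, ih]

lemma phi_it_mod (hφ3 : ∀ x, φ (φ (φ x)) = x) (n : ℕ) (x : g) :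
    (fun z => φ z)^[n] x = (fun z => φ z)^[n % 3] x := by
  conv_lhs => rw [← Nat.div_add_mod n 3, Function.iterate_add_apply,
    phi_it_three_mul φ hφ3]

lemma iota_shift (hφ3 : ∀ x, φ (φ (φ x)) = x) (k i : ZMod 3) (x : A) :
    (fun z => φ z)^[k.val] (iota φ A i x) = iota φ A (i + k) x := by
  unfold iota
  rw [← Function.iterate_add_apply, phi_it_mod φ hφ3, ZMod.val_add]
  congr 1
  omega

lemma iota_injective (hφ3 : ∀ x, φ (φ (φ x)) = x) (j : ZMod 3) : Function.Injective (iota φ A j) := by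
  have hinj : Function.Injective (fun z => φ z) := by
    intro u v huv
    have := congrArg (fun z => φ (φ z)) huv
    simpa [hφ3] using this
  intro x y h
  exact Subtype.ext (hinj.iterate j.val h)

lemma iota_zero (x : A) : iota φ A 0 x = (x : g) := by
  simp [iota, ZMod.val_zero]

end Aux

/-- In a Lie algebra with `A₄`-action, the maps `δᵢ` satisfy
`[δᵢ(a,b), δⱼ(x,y)] = δⱼ(δᵢ₋ⱼ(a,b)(x), y) + δⱼ(x, δᵢ₋ⱼ(a,b)(y))`. -/
theorem stmt9
    (F : Type*) [Field F] (hchar : (2 : F) ≠ 0)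
    (g : Type*) [LieRing g] [LieAlgebra F g]
    (τ₁ τ₂ φ : g →ₗ⁅F⁆ g)
    (hτ₁ : ∀ x, τ₁ (τ₁ x) = x) (hτ₂ : ∀ x, τ₂ (τ₂ x) = x)
    (hcomm : ∀ x, τ₁ (τ₂ x) = τ₂ (τ₁ x))
    (hφ3 : ∀ x, φ (φ (φ x)) = x)
    (hrel1 : ∀ x, φ (τ₁ x) = τ₂ (φ x))
    (hrel2 : ∀ x, φ (τ₂ x) = τ₁ (τ₂ (φ x)))
    (A : Submodule F g)
    (hA : A = Module.End.eigenspace (τ₁ : g →ₗ[F] g) 1 ⊓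
              Module.End.eigenspace (τ₂ : g →ₗ[F] g) (-1))
    (δ : ZMod 3 → A → A → A → A)
    (hδ : ∀ (i : ZMod 3) (x y z : A),
      ⁅⁅iota φ A 0 x, iota φ A 0 y⁆, iota φ A i z⁆ = iota φ A i (δ i x y z))
    :
    ∀ (i j : ZMod 3) (a b x y w : A),
      δ i a b (δ j x y w) - δ j x y (δ i a b w)
        = δ j (δ (i - j) a b x) y w + δ j x (δ (i - j) a b y) w := by
  -- Key shifted relation
  have key : ∀ (k m : ZMod 3) (a b z : A),
      ⁅⁅iota φ A k a, iota φ A k b⁆, iota φ A m z⁆ = iota φ A m (δ (m - k) a b z) := by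
    intro k m a b z
    have ha : iota φ A k a = (fun t => φ t)^[k.val] (iota φ A 0 a) := by
      rw [iota_shift φ A hφ3 k 0 a, zero_add]
    have hb : iota φ A k b = (fun t => φ t)^[k.val] (iota φ A 0 b) := by
      rw [iota_shift φ A hφ3 k 0 b, zero_add]
    have hz : iota φ A m z = (fun t => φ t)^[k.val] (iota φ A (m - k) z) := by
      rw [iota_shift φ A hφ3 k (m - k) z, sub_add_cancel]
    have hout : iota φ A m (δ (m - k) a b z)
        = (fun t => φ t)^[k.val] (iota φ A (m - k) (δ (m - k) a b z)) := by
      rw [iota_shift φ A hφ3 k (m - k) _, sub_add_cancel]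
    rw [ha, hb, hz, hout, ← phi_it_lie, ← phi_it_lie, hδ]
  intro i j a b x y w
  set k := j - i with hk
  have hjk : j - k = i := by rw [hk]; ring
  have h0k : (0 : ZMod 3) - k = i - j := by rw [hk]; ring
  -- Jacobi identity
  have jac : ⁅⁅iota φ A k a, iota φ A k b⁆, ⁅⁅iota φ A 0 x, iota φ A 0 y⁆, iota φ A j w⁆⁆
      = ⁅⁅⁅iota φ A k a, iota φ A k b⁆, ⁅iota φ A 0 x, iota φ A 0 y⁆⁆, iota φ A j w⁆
        + ⁅⁅iota φ A 0 x, iota φ A 0 y⁆, ⁅⁅iota φ A k a, iota φ A k b⁆, iota φ A j w⁆⁆ :=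
    leibniz_lie _ _ _
  -- compute each piece
  rw [hδ j x y w, key k j a b, hjk] at jac
  have hED : ⁅⁅iota φ A k a, iota φ A k b⁆, ⁅iota φ A 0 x, iota φ A 0 y⁆⁆
      = ⁅iota φ A 0 (δ (i - j) a b x), iota φ A 0 y⁆
        + ⁅iota φ A 0 x, iota φ A 0 (δ (i - j) a b y)⁆ := by
    rw [leibniz_lie, key k 0 a b x, key k 0 a b y, h0k]
  rw [hED, add_lie, hδ j _ y w, hδ j x _ w, key k j a b w, hjk,
    hδ j x y (δ i a b w)] at jac
  have hadd : iota φ A j (δ j (δ (i - j) a b x) y w) + iota φ A j (δ j x (δ (i - j) a b y) w)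
      + iota φ A j (δ j x y (δ i a b w))
      = iota φ A j (δ j (δ (i - j) a b x) y w + δ j x (δ (i - j) a b y) w
          + δ j x y (δ i a b w)) := by
    unfold iota
    push_cast
    rw [phi_it_add, phi_it_add]
  rw [hadd] at jac
  have := iota_injective φ A hφ3 j jac
  rw [this]
  abel
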